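/- arXiv:1811.09121 — 2 statements merged into one kernel-verified Lean document; each statement's English description precedes it below -/
import Mathlib

section
/- The winding number of the lift of any planar knotoid in the double branched cover solid torus is odd: the class of γ_T(k) in H₁(S¹ × D²; ℤ) ≅ ℤ is an odd integer. -/
/-! The deck involution restricts along the embedding `K` to an involution `τ` of the parameter
circle that fixes the parameters `t₀`, `t₁` of the two branch points and reverses the angular
coordinate `θ` of `K`. Lift `τ` to `G : ℝ → ℝ` fixing a lift `y₀` of `t₀`. Then `F ∘ G + F` lifts
`θ ∘ τ + θ = 0`, so it is constant, equal to `2 F y₀ ∈ 2ℤ`. At a lift `y₁` of `t₁` we have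
`G y₁ = y₁ + k` with `k ∈ ℤ`, so the same constant is `2 F y₁ + k w ∈ 2ℤ + 1 + k w`, because
`θ t₁ = 1/2`. Hence `k w` is odd, and so is `w`. -/

open Complex

/-- The deck involution of the double branched cover `S¹ × D² → D² × I`:
half of the circle factor is reflected (`θ ↦ -θ`) and the disc factor is
conjugated; its fixed point set is the two "branch arcs"
`{0} × ℝ` and `{1/2} × ℝ`. -/
noncomputable def deckInv : AddCircle (1 : ℝ) × ℂ → AddCircle (1 : ℝ) × ℂ :=
  fun p => (-p.1, starRingEnd ℂ p.2)

open Topology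

lemma continuous_deckInv : Continuous deckInv :=
  continuous_fst.neg.prodMk (Complex.continuous_conj.comp continuous_snd)

lemma Topology.IsEmbedding.exists_continuous_comp_eq {X Y Z : Type*} [TopologicalSpace X]
    [TopologicalSpace Y] [TopologicalSpace Z] {f : X → Y} (hf : IsEmbedding f) {g : Z → Y}
    (hg : Continuous g) (hrange : ∀ z, ∃ x, f x = g z) :
    ∃ τ : Z → X, Continuous τ ∧ ∀ z, f (τ z) = g z := by
  choose τ hτ using hrange
  refine ⟨τ, ?_, hτ⟩
  rw [hf.continuous_iff]
  simpa only [Function.comp_def, hτ] using hg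

namespace AddCircle

variable {p : ℝ}

lemma exists_int_eq_add_of_coe_eq_coe {x y : ℝ} (h : (x : AddCircle (1 : ℝ)) = y) :
    ∃ k : ℤ, x = y + k := by
  rw [← sub_eq_zero, ← coe_sub, coe_eq_zero_iff] at h
  obtain ⟨k, hk⟩ := h
  exact ⟨k, by rw [zsmul_one] at hk; linarith⟩

lemma exists_continuous_lift {g : ℝ → AddCircle p} (hg : Continuous g) {a e : ℝ}
    (he : (e : AddCircle p) = g a) :
    ∃ G : ℝ → ℝ, Continuous G ∧ G a = e ∧ ∀ t, (G t : AddCircle p) = g t := by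
  obtain ⟨G, ⟨hGa, hG⟩, -⟩ :=
    (isCoveringMap_coe p).existsUnique_continuousMap_lifts ⟨g, hg⟩ a e he
  exact ⟨G, G.continuous, hGa, congrFun hG⟩

lemma lift_add_int_mul {F : ℝ → ℝ} (hF : Continuous F)
    (hper : ∀ t, (F (t + 1) : AddCircle p) = F t) (k : ℤ) (t : ℝ) :
    F (t + k) = F t + k * (F 1 - F 0) := by
  set w := F 1 - F 0
  have hshift : (fun t => F (t + 1)) = fun t => F t + w := by
    refine (isCoveringMap_coe p).eq_of_comp_eq (hF.comp (continuous_add_const 1))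
      (hF.add continuous_const) (funext fun t => ?_) 0 (by simp [w])
    have hw : (w : AddCircle p) = 0 := by
      have h1 := hper 0
      rw [zero_add] at h1
      rw [coe_sub, h1, sub_self]
    simp [hper, hw]
  have hperiodic : Function.Periodic (fun t => F t - w * t) 1 := fun t => by
    simp only [congrFun hshift t]; ring
  have := hperiodic.int_mul k t
  simp only [mul_one] at this
  linarith

lemma lift_comp_add_lift_eq_two_mul {θ : AddCircle (1 : ℝ) → AddCircle p}
    {τ : AddCircle (1 : ℝ) → AddCircle (1 : ℝ)} (hθτ : ∀ t, θ (τ t) = -θ t)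
    {F G : ℝ → ℝ} (hF : Continuous F) (hG : Continuous G)
    (hFθ : ∀ t, (F t : AddCircle p) = θ t) (hGτ : ∀ t, (G t : AddCircle (1 : ℝ)) = τ t)
    {y : ℝ} (hy : G y = y) (t : ℝ) :
    F (G t) + F t = 2 * F y := by
  suffices F ∘ G = fun t => 2 * F y - F t by
    have := congrFun this t
    simp only [Function.comp_apply] at this
    linarith
  refine (isCoveringMap_coe p).eq_of_comp_eq (hF.comp hG) (continuous_const.sub hF)
    (funext fun t => ?_) y (by simp only [Function.comp_apply, hy]; ring)
  have h2 : ((2 * F y : ℝ) : AddCircle p) = 0 := by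
    have := hθτ y
    rw [← hGτ, hy] at this
    rw [two_mul, coe_add, hFθ]
    nth_rw 1 [this]
    exact neg_add_cancel _
  simp [hFθ, hGτ, hθτ, h2]

end AddCircle

/-- the winding number of the lift of a planar knotoid in the double
branched cover solid torus is odd.  The lifted knot `K` is a closed curve in
`S¹ × D²` invariant under the deck involution, meeting each of the two branch
arcs (`θ = 0` and `θ = 1/2`) exactly once (the lifts of the two endpoints of the
knotoid).  If `F` is a continuous lift to `ℝ` of the `S¹`-coordinate of `K`, the
winding number `w = F 1 - F 0` is an odd integer. -/
theorem stmt14 (K : C(AddCircle (1 : ℝ), AddCircle (1 : ℝ) × ℂ))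
    (hinj : Function.Injective K)
    (hequiv : ∀ t, ∃ s, K s = deckInv (K t))
    (hfix0 : ∃! t, deckInv (K t) = K t ∧ (K t).1 = (0 : ℝ))
    (hfix1 : ∃! t, deckInv (K t) = K t ∧ (K t).1 = ((1 : ℝ) / 2 : ℝ))
    (F : ℝ → ℝ) (hFcont : Continuous F)
    (hFlift : ∀ t : ℝ, ((F t : ℝ) : AddCircle (1 : ℝ)) = (K (t : ℝ)).1)
    (w : ℤ) (hw : F 1 = F 0 + w) :
    Odd w := by
  obtain ⟨τ, hτc, hτ⟩ :=
    (K.continuous.isClosedEmbedding hinj).isEmbedding.exists_continuous_comp_eq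
      (continuous_deckInv.comp' K.continuous) hequiv
  have hfixed : ∀ t, deckInv (K t) = K t → τ t = t := fun t ht => hinj (by rw [hτ, ht])
  obtain ⟨t0, ⟨hK0, hθ0⟩, -⟩ := hfix0
  obtain ⟨t1, ⟨hK1, hθ1⟩, -⟩ := hfix1
  obtain ⟨y0, rfl⟩ := QuotientAddGroup.mk_surjective t0
  obtain ⟨y1, rfl⟩ := QuotientAddGroup.mk_surjective t1
  obtain ⟨G, hGc, hGy0, hG⟩ := AddCircle.exists_continuous_lift
    (hτc.comp' (AddCircle.isCoveringMap_coe 1).continuous) (hfixed _ hK0).symm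
  have hsym := AddCircle.lift_comp_add_lift_eq_two_mul (θ := fun t => (K t).1)
    (fun t => congrArg Prod.fst (hτ t)) hFcont hGc hFlift hG hGy0 y1
  obtain ⟨k, hk⟩ := AddCircle.exists_int_eq_add_of_coe_eq_coe ((hG y1).trans (hfixed _ hK1))
  obtain ⟨m0, hm0⟩ := AddCircle.exists_int_eq_add_of_coe_eq_coe ((hFlift y0).trans hθ0)
  obtain ⟨m1, hm1⟩ := AddCircle.exists_int_eq_add_of_coe_eq_coe ((hFlift y1).trans hθ1)
  have hFper : ∀ t, (F (t + 1) : AddCircle (1 : ℝ)) = F t := fun t => by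
    rw [hFlift, hFlift, AddCircle.coe_add_period]
  rw [hk, AddCircle.lift_add_int_mul hFcont hFper, hw, add_sub_cancel_left] at hsym
  have hkw : k * w = 2 * (m0 - m1 - 1) + 1 := by
    have : ((k * w : ℤ) : ℝ) = (2 * (m0 - m1 - 1) + 1 : ℤ) := by push_cast; linarith
    exact_mod_cast this
  exact (Int.odd_mul.mp ⟨_, hkw⟩).2
end

section
/- In the doubling algorithm for Gauss codes, the output code C' is a sequence of length twice the length of the b-free part of the input: concretely, C' = W ++ reverse(σ(W)) where W is the walk produced from the input by shifting labels by n on segments following an odd number of b's, and σ swaps labels j and j+n. In particular every label 1..2n appears exactly twice in C'. -/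
/-!
Reducing labels modulo `n` undoes the shifting, so the walk `W` is a lift of the `b`-free part
of the code: each occurrence of crossing `i` becomes an occurrence of `i` or of `i + n`. The
involution `σ` preserves labels modulo `n`, hence a label `j` occurs in `W ++ reverse (σ W)` as
often as `j` and `σ j` together occur in `W`, i.e. as often as `j mod n` occurs in the input.
-/

namespace GaussLift

/-- An entry of a generalised Gauss code for an `n`-crossing knotoid diagram:
`some (i, o)` is a passage through crossing `i` (`o = true` for an overpass),
`none` is a `b`-entry (an intersection with one of the two branch cut arcs). -/
abbrev Entry (n : ℕ) := Option (Fin n × Bool)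

/-- Shift a label by `n` when an odd number of `b`-entries has been seen. -/
def shiftLabel {n : ℕ} (i : Fin n) (parity : ℕ) : Fin (2 * n) :=
  if parity % 2 = 0 then ⟨i.1, by have := i.isLt; omega⟩
  else ⟨i.1 + n, by have := i.isLt; omega⟩

/-- The walk `W`: traverse the generalised code, copying label entries, adding `n`
to labels whenever an odd number of `b`-entries has been encountered so far, and
dropping the `b`-entries. -/
def walk {n : ℕ} : List (Entry n) → ℕ → List (Fin (2 * n) × Bool)
  | [], _ => []
  | none :: rest, parity => walk rest (parity + 1)
  | some (i, o) :: rest, parity => (shiftLabel i parity, o) :: walk rest parity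

/-- The involution `σ` swapping labels `j` and `j + n`. -/
def σswap {n : ℕ} (j : Fin (2 * n)) : Fin (2 * n) :=
  if h : j.1 < n then ⟨j.1 + n, by omega⟩ else ⟨j.1 - n, by have := j.isLt; omega⟩

/-- The output of the doubling algorithm: `C' = W ++ reverse (σ W)`. -/
def liftCode {n : ℕ} (L : List (Entry n)) : List (Fin (2 * n) × Bool) :=
  walk L 0 ++ ((walk L 0).map (fun e => (σswap e.1, e.2))).reverse

theorem _root_.List.countP_or_of_disjoint {α : Type*} (p q : α → Bool)
    (hpq : ∀ a, ¬(p a ∧ q a)) (l : List α) :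
    l.countP (fun a => p a || q a) = l.countP p + l.countP q := by
  induction l with
  | nil => rfl
  | cons a l ih =>
    simp only [List.countP_cons, ih]
    have hdisj := hpq a
    revert hdisj
    cases p a <;> cases q a <;> simp <;> omega

def baseLabel {n : ℕ} (j : Fin (2 * n)) : Fin n :=
  ⟨j.1 % n, Nat.mod_lt _ (by have := j.isLt; omega)⟩

theorem val_baseLabel {n : ℕ} (j : Fin (2 * n)) :
    (baseLabel j).1 = if j.1 < n then j.1 else j.1 - n := by
  have := j.isLt
  change j.1 % n = _
  split_ifs with h
  · exact Nat.mod_eq_of_lt h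
  · rw [Nat.mod_eq_sub_mod (by omega), Nat.mod_eq_of_lt (by omega)]

theorem baseLabel_shiftLabel {n : ℕ} (i : Fin n) (parity : ℕ) :
    baseLabel (shiftLabel i parity) = i := by
  have := i.isLt
  ext
  rw [val_baseLabel]
  unfold shiftLabel
  split_ifs <;> simp_all

theorem map_baseLabel_walk {n : ℕ} (L : List (Entry n)) (parity : ℕ) :
    (walk L parity).map (Prod.map baseLabel id) = L.filterMap id := by
  induction L generalizing parity with
  | nil => rfl
  | cons a L ih =>
    rcases a with _ | ⟨i, o⟩
    · exact ih (parity + 1)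
    · simp [walk, baseLabel_shiftLabel, ih]

theorem length_walk {n : ℕ} (L : List (Entry n)) (parity : ℕ) :
    (walk L parity).length = (L.filterMap id).length := by
  rw [← map_baseLabel_walk L parity, List.length_map]

theorem val_σswap {n : ℕ} (j : Fin (2 * n)) :
    (σswap j).1 = if j.1 < n then j.1 + n else j.1 - n := by
  unfold σswap
  split_ifs <;> rfl

theorem σswap_involutive {n : ℕ} : Function.Involutive (σswap (n := n)) := by
  intro j
  have := j.isLt
  ext
  simp only [val_σswap]
  split_ifs <;> omega

theorem σswap_ne_self {n : ℕ} (j : Fin (2 * n)) : σswap j ≠ j := by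
  rw [Ne, Fin.ext_iff, val_σswap]
  split_ifs <;> omega

theorem baseLabel_eq_baseLabel_iff {n : ℕ} (a b : Fin (2 * n)) :
    baseLabel a = baseLabel b ↔ a = b ∨ a = σswap b := by
  have := a.isLt
  have := b.isLt
  simp only [Fin.ext_iff, val_baseLabel, val_σswap]
  split_ifs <;> omega

theorem countP_baseLabel_eq {n : ℕ} (l : List (Fin (2 * n) × Bool)) (j : Fin (2 * n)) :
    l.countP (fun e => decide (baseLabel e.1 = baseLabel j)) =
      l.countP (fun e => decide (e.1 = j)) + l.countP (fun e => decide (e.1 = σswap j)) := by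
  simp only [baseLabel_eq_baseLabel_iff, Bool.decide_or]
  refine List.countP_or_of_disjoint _ _ (fun e h => σswap_ne_self j ?_) l
  simp only [decide_eq_true_eq] at h
  exact h.2.symm.trans h.1

theorem countP_liftCode {n : ℕ} (L : List (Entry n)) (j : Fin (2 * n)) :
    (liftCode L).countP (fun e => decide (e.1 = j)) =
      (L.filterMap id).countP (fun e => decide (e.1 = baseLabel j)) := by
  have hσ (a : Fin (2 * n)) : σswap a = j ↔ a = σswap j := σswap_involutive.eq_iff
  rw [← map_baseLabel_walk L 0, List.countP_map, liftCode, List.countP_append,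
    List.countP_reverse, List.countP_map]
  simp only [Function.comp_def, Prod.map_fst, hσ]
  exact (countP_baseLabel_eq _ j).symm

/-- for a generalised Gauss code `L` of an `n`-crossing knotoid
diagram (each label appearing exactly twice), the output `C'` of the doubling
algorithm is `W ++ reverse(σ(W))`, its length is twice the length of the `b`-free
part of `L`, and every label `1..2n` appears exactly twice in `C'`: the output is
a valid Gauss code sequence on `2n` labels. -/
theorem stmt16 {n : ℕ} (L : List (Entry n))
    (hL : ∀ i : Fin n, (L.filterMap id).countP (fun e => decide (e.1 = i)) = 2) :
    liftCode L = walk L 0 ++ ((walk L 0).map (fun e => (σswap e.1, e.2))).reverse ∧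
    (liftCode L).length = 2 * (L.filterMap id).length ∧
    ∀ j : Fin (2 * n), (liftCode L).countP (fun e => decide (e.1 = j)) = 2 := by
  refine ⟨rfl, ?_, fun j => (countP_liftCode L j).trans (hL (baseLabel j))⟩
  simp only [liftCode, List.length_append, List.length_reverse, List.length_map, length_walk]
  ring

end GaussLift
end
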